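/- For a finite family of pairwise disjoint closed axis-aligned rectangles contained in the boundary B and a fixed direction α ∈ {left, right, up, down}, the blocking relation in direction α (R_j blocks R_i if j ≠ i and R_j intersects the α-escape path of R_i) contains no directed cycle; in particular it admits a topological order. -/

import Mathlib

/-- One of the four axis-aligned escape directions. -/
inductive Dir | left | right | up | down
deriving DecidableEq

instance : Fintype Dir :=
  ⟨{Dir.left, Dir.right, Dir.up, Dir.down}, fun x => by cases x <;> simp⟩

/-- A closed axis-aligned rectangle `[xmin,xmax] × [ymin,ymax]`. -/
structure Rect where
  xmin : ℝ
  xmax : ℝ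
  ymin : ℝ
  ymax : ℝ

/-- The point set of a rectangle. -/
def Rect.pts (r : Rect) : Set (ℝ × ℝ) :=
  {p | r.xmin ≤ p.1 ∧ p.1 ≤ r.xmax ∧ r.ymin ≤ p.2 ∧ p.2 ≤ r.ymax}

/-- The rectangle is a genuine (nonempty) closed rectangle. -/
def Rect.proper (r : Rect) : Prop := r.xmin ≤ r.xmax ∧ r.ymin ≤ r.ymax

/-- The boundary box `B = [0,W] × [0,H]`. -/
def boundaryBox (W H : ℝ) : Set (ℝ × ℝ) := {p | 0 ≤ p.1 ∧ p.1 ≤ W ∧ 0 ≤ p.2 ∧ p.2 ≤ H}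

/-- The rectangle is contained in the boundary box `[0,W] × [0,H]`. -/
def Rect.inB (W H : ℝ) (r : Rect) : Prop :=
  0 ≤ r.xmin ∧ r.xmax ≤ W ∧ 0 ≤ r.ymin ∧ r.ymax ≤ H

/-- The escape path of a rectangle in a given direction, inside `[0,W] × [0,H]`. -/
def Rect.escape (W H : ℝ) (r : Rect) : Dir → Set (ℝ × ℝ)
  | Dir.right => {p | r.xmin ≤ p.1 ∧ p.1 ≤ W ∧ r.ymin ≤ p.2 ∧ p.2 ≤ r.ymax}
  | Dir.left  => {p | 0 ≤ p.1 ∧ p.1 ≤ r.xmax ∧ r.ymin ≤ p.2 ∧ p.2 ≤ r.ymax}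
  | Dir.up    => {p | r.xmin ≤ p.1 ∧ p.1 ≤ r.xmax ∧ r.ymin ≤ p.2 ∧ p.2 ≤ H}
  | Dir.down  => {p | r.xmin ≤ p.1 ∧ p.1 ≤ r.xmax ∧ 0 ≤ p.2 ∧ p.2 ≤ r.ymax}

/-- Density at point `p` of the escape assignment `σ` restricted to the subfamily `S`. -/
noncomputable def density {n : ℕ} (W H : ℝ) (R : Fin n → Rect) (S : Set (Fin n))
    (σ : Fin n → Dir) (p : ℝ × ℝ) : ℕ :=
  {i | i ∈ S ∧ p ∈ (R i).escape W H (σ i)}.ncard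

/-- The optimal (minimum over assignments of the maximum over points of `B`) density of
the subfamily `S`. -/
noncomputable def optDensity {n : ℕ} (W H : ℝ) (R : Fin n → Rect) (S : Set (Fin n)) : ℕ :=
  sInf {k | ∃ σ : Fin n → Dir, ∀ p ∈ boundaryBox W H, density W H R S σ p ≤ k}

/-- `R j` blocks `R i` in direction `α`. -/
def blocks {n : ℕ} (W H : ℝ) (R : Fin n → Rect) (α : Dir) (j i : Fin n) : Prop :=
  j ≠ i ∧ ¬ Disjoint (R j).pts ((R i).escape W H α)

/-- `R i` is free in direction `α` within the subfamily `S`: no other rectangle of `S`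
blocks it in direction `α`. -/
def free {n : ℕ} (W H : ℝ) (R : Fin n → Rect) (S : Set (Fin n)) (i : Fin n) (α : Dir) : Prop :=
  ∀ j ∈ S, j ≠ i → Disjoint ((R i).escape W H α) (R j).pts

/-- `peel W H R ℓ` is the set of indices remaining after removing peeling levels `1,…,ℓ`. -/
def peel {n : ℕ} (W H : ℝ) (R : Fin n → Rect) : ℕ → Set (Fin n)
  | 0 => Set.univ
  | ℓ + 1 => {i ∈ peel W H R ℓ | ¬ ∃ α, free W H R (peel W H R ℓ) i α}

/-- The peeling level of rectangle `R i` (the least `ℓ` at which it has been removed). -/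
noncomputable def levelOf {n : ℕ} (W H : ℝ) (R : Fin n → Rect) (i : Fin n) : ℕ :=
  sInf {ℓ | i ∉ peel W H R ℓ}

/-- The number `ρ` of nonempty peeling levels. -/
noncomputable def numLevels {n : ℕ} (W H : ℝ) (R : Fin n → Rect) : ℕ :=
  sInf {ℓ | peel W H R ℓ = ∅}

def Rect.rear (r : Rect) : Dir → ℝ
  | Dir.right => r.xmin
  | Dir.left => -r.xmax
  | Dir.up => r.ymin
  | Dir.down => -r.ymax

theorem Rect.rear_lt_of_not_disjoint_escape {r s : Rect} {W H : ℝ} {α : Dir} (hr : r.proper)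
    (hrs : Disjoint r.pts s.pts) (hblock : ¬ Disjoint s.pts (r.escape W H α)) :
    r.rear α < s.rear α := by
  obtain ⟨p, ⟨hs₁, hs₂, hs₃, hs₄⟩, hp⟩ := Set.not_disjoint_iff.mp hblock
  rw [Set.disjoint_left] at hrs
  -- Otherwise `p`, pushed back onto the trailing side of `r`, lies in both rectangles.
  by_contra! hle
  cases α with
  | right =>
    obtain ⟨hp₁, -, hp₃, hp₄⟩ := hp
    exact hrs (a := (r.xmin, p.2)) ⟨le_rfl, hr.1, hp₃, hp₄⟩ ⟨hle, hp₁.trans hs₂, hs₃, hs₄⟩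
  | left =>
    obtain ⟨-, hp₂, hp₃, hp₄⟩ := hp
    exact hrs (a := (r.xmax, p.2)) ⟨hr.1, le_rfl, hp₃, hp₄⟩
      ⟨hs₁.trans hp₂, neg_le_neg_iff.mp hle, hs₃, hs₄⟩
  | up =>
    obtain ⟨hp₁, hp₂, hp₃, -⟩ := hp
    exact hrs (a := (p.1, r.ymin)) ⟨hp₁, hp₂, le_rfl, hr.2⟩ ⟨hs₁, hs₂, hle, hp₃.trans hs₄⟩
  | down =>
    obtain ⟨hp₁, hp₂, -, hp₄⟩ := hp
    exact hrs (a := (p.1, r.ymax)) ⟨hp₁, hp₂, hr.2, le_rfl⟩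
      ⟨hs₁, hs₂, hs₃.trans hp₄, neg_le_neg_iff.mp hle⟩

theorem rear_lt_of_blocks {n : ℕ} {W H : ℝ} {R : Fin n → Rect} {α : Dir}
    (hprop : ∀ i, (R i).proper) (hdisj : ∀ i j, i ≠ j → Disjoint (R i).pts (R j).pts)
    {i j : Fin n} (h : blocks W H R α j i) : (R i).rear α < (R j).rear α :=
  Rect.rear_lt_of_not_disjoint_escape (hprop i) (hdisj i j h.1.symm) h.2

theorem blocking_relation_acyclic_general {n : ℕ} (W H : ℝ) (R : Fin n → Rect)
    (hprop : ∀ i, (R i).proper)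
    (hdisj : ∀ i j, i ≠ j → Disjoint (R i).pts (R j).pts)
    (α : Dir) :
    ∀ i, ¬ Relation.TransGen (blocks W H R α) i i := by
  intro i hcycle
  have hlt : Relation.TransGen (· < ·) ((R i).rear α) ((R i).rear α) :=
    Relation.TransGen.lift (fun k => (R k).rear α)
      (fun _ _ h => rear_lt_of_blocks hprop hdisj h) i i hcycle.swap
  rw [Relation.transGen_eq_self] at hlt
  exact lt_irrefl _ hlt

/-- For pairwise disjoint rectangles in `B` and a fixed direction `α`, the
blocking relation in direction `α` has no directed cycle (its transitive closure is
irreflexive); in particular it admits a topological order. -/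
theorem blocking_relation_acyclic {n : ℕ} (W H : ℝ) (R : Fin n → Rect)
    (hprop : ∀ i, (R i).proper) (hin : ∀ i, (R i).inB W H)
    (hdisj : ∀ i j, i ≠ j → Disjoint (R i).pts (R j).pts)
    (α : Dir) :
    ∀ i, ¬ Relation.TransGen (blocks W H R α) i i :=
  blocking_relation_acyclic_general W H R hprop hdisj α
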